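/- Let D be a Dedekind domain. Then the set of isomorphism classes of semidualizing D-modules coincides with the divisor class group: Pic(D) = Cl(D) = 𝔖₀(D). In particular, if Pic(D) is nontrivial, then D admits a non-free semidualizing module, while for every maximal ideal m of D the localization D_m admits only the free semidualizing module. -/

import Mathlib

/-!
An invertible module `M` is finite projective with `End M = R`, so it is semidualizing over any ring.
Conversely, let `N` be semidualizing over a Dedekind domain `R` with fraction field `K`. As `N` is
finitely presented, `End_K (K ⊗ N)` is the localization of `End N = R`, i.e. `K`, so `K ⊗ N` is a
line. The torsion-free quotient `N ⧸ torsion` is flat, hence projective, so the projection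
`N → N ⧸ torsion` splits; the resulting idempotent endomorphism is a homothety by `0` or `1`, and
it cannot be `0` because a finite torsion module is not faithful. Thus `N` is torsion-free of
rank one, so it embeds into `K` as a nonzero fractional ideal, which is invertible. Reflexive
modules are torsion-free, which gives the description by reflexivity, and over the local rings
`R_m` invertible modules are free.
-/

open TensorProduct CategoryTheory
universe u

noncomputable def ExtMod (R : Type u) [CommRing R] (M N : Type u) [AddCommGroup M]
    [AddCommGroup N] [Module R M] [Module R N] (i : ℕ) : Type u :=
  ((Ext R (ModuleCat R) i).obj (Opposite.op (ModuleCat.of R M))).obj (ModuleCat.of R N)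

def IsSemidualizing (R : Type u) [CommRing R] (C : Type u) [AddCommGroup C]
    [Module R C] : Prop :=
  Module.Finite R C ∧ Function.Bijective (LinearMap.lsmul R C) ∧
    ∀ i : ℕ, 1 ≤ i → Subsingleton (ExtMod R C C i)

def IsInvertibleModule (R : Type u) [CommRing R] (a : Type u) [AddCommGroup a]
    [Module R a] : Prop :=
  Module.Finite R a ∧
    ∃ (b : Type u) (_ : AddCommGroup b) (_ : Module R b),
      Module.Finite R b ∧ Nonempty ((a ⊗[R] b) ≃ₗ[R] R)

open scoped nonZeroDivisors

section CommRing

variable {R : Type u} [CommRing R]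

theorem ExtMod.subsingleton_of_projective (P N : Type u) [AddCommGroup P] [Module R P]
    [AddCommGroup N] [Module R N] [Module.Projective R P] {i : ℕ} (hi : 1 ≤ i) :
    Subsingleton (ExtMod R P N i) := by
  obtain ⟨n, rfl⟩ := Nat.exists_eq_add_of_le' hi
  have : Projective (ModuleCat.of R P) := (IsProjective.iff_projective P).mp ‹_›
  exact ModuleCat.subsingleton_of_isZero (isZero_Ext_succ_of_projective _ _ n)

theorem isInvertibleModule_iff (N : Type u) [AddCommGroup N] [Module R N] :
    IsInvertibleModule R N ↔ Module.Invertible R N :=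
  ⟨fun ⟨_, _, _, _, _, ⟨e⟩⟩ => .left e, fun _ => ⟨inferInstance, Module.Dual R N,
    inferInstance, inferInstance, inferInstance,
    ⟨TensorProduct.comm R N _ ≪≫ₗ Module.Invertible.linearEquiv R N⟩⟩⟩

theorem Module.Invertible.isSemidualizing (N : Type u) [AddCommGroup N] [Module R N]
    [Module.Invertible R N] : IsSemidualizing R N :=
  ⟨inferInstance, Module.Invertible.toModuleEnd_bijective R N,
    fun _ hi => ExtMod.subsingleton_of_projective N N hi⟩

theorem Module.IsTorsion.not_injective_lsmul [Nontrivial R] (N : Type u) [AddCommGroup N]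
    [Module R N] [Module.Finite R N] (hN : Module.IsTorsion R N) :
    ¬ Function.Injective (LinearMap.lsmul R N) := fun h => by
  obtain ⟨r, hr, hr0⟩ := Submodule.annihilator_top_inter_nonZeroDivisors hN
  refine nonZeroDivisors.ne_zero hr0 (h <| LinearMap.ext fun x => ?_)
  simpa using Submodule.mem_annihilator.mp hr x Submodule.mem_top

end CommRing

section Domain

variable {R : Type u} [CommRing R] [IsDomain R]

local notation "K" => FractionRing R

theorem finrank_fractionRing_tensor_eq_one_of_bijective_lsmul (N : Type u) [AddCommGroup N]
    [Module R N] [Module.FinitePresentation R N] (h : Function.Bijective (LinearMap.lsmul R N)) :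
    Module.finrank K (K ⊗[R] N) = 1 := by
  let f : N →ₗ[R] K ⊗[R] N := TensorProduct.mk R K N 1
  have : IsLocalizedModule R⁰ f :=
    (isLocalizedModule_iff_isBaseChange R⁰ K f).mpr (TensorProduct.isBaseChange R N K)
  let g := IsLocalizedModule.mapExtendScalars R⁰ f f K
  have : IsLocalizedModule R⁰ g :=
    Module.FinitePresentation.isLocalizedModule_mapExtendScalars R⁰ f f K
  let hom : R ≃ₗ[R] Module.End R N := .ofBijective _ h
  have : IsLocalizedModule R⁰ (g ∘ₗ hom.toLinearMap) := .of_linearEquiv_right R⁰ g hom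
  let e : Module.End K (K ⊗[R] N) ≃ₗ[K] K := LinearEquiv.extendScalarsOfIsLocalization R⁰ K <|
    (IsLocalizedModule.iso R⁰ (g ∘ₗ hom.toLinearMap)).symm ≪≫ₗ
      IsLocalizedModule.iso R⁰ (Algebra.linearMap R K)
  have hsq : Module.finrank K (K ⊗[R] N) * Module.finrank K (K ⊗[R] N) = 1 := by
    rw [← Module.finrank_linearMap, e.finrank_eq, Module.finrank_self]
  exact Nat.eq_one_of_mul_eq_one_right hsq

end Domain

section Dedekind

variable {R : Type u} [CommRing R] [IsDedekindDomain R]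

local notation "K" => FractionRing R

theorem Module.projective_quotient_torsion (N : Type u) [AddCommGroup N] [Module R N]
    [Module.Finite R N] : Module.Projective R (N ⧸ Submodule.torsion R N) :=
  have : Module.FinitePresentation R (N ⧸ Submodule.torsion R N) :=
    Module.finitePresentation_of_finite _ _
  Module.Flat.projective_of_finitePresentation

theorem isTorsionFree_of_bijective_lsmul (N : Type u) [AddCommGroup N] [Module R N]
    [Module.Finite R N] (h : Function.Bijective (LinearMap.lsmul R N)) :
    Module.IsTorsionFree R N := by
  set T := Submodule.torsion R N
  have := Module.projective_quotient_torsion (R := R) N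
  obtain ⟨s, hs⟩ := Module.projective_lifting_property T.mkQ LinearMap.id T.mkQ_surjective
  obtain ⟨d, hd⟩ := h.2 (s ∘ₗ T.mkQ)
  have hdx (x : N) : d • x = s (T.mkQ x) := LinearMap.congr_fun hd x
  have hidem : IsIdempotentElem d := h.1 <| LinearMap.ext fun x => by
    simp only [LinearMap.lsmul_apply, mul_smul, hdx, ← LinearMap.comp_apply T.mkQ s, hs,
      LinearMap.id_apply]
  rcases IsIdempotentElem.iff_eq_zero_or_one.mp hidem with rfl | rfl
  · refine absurd h.1 (Module.IsTorsion.not_injective_lsmul N fun {x} => ?_)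
    have hx : T.mkQ x = 0 := by
      rw [← LinearMap.id_apply (R := R) (T.mkQ x), ← hs, LinearMap.comp_apply, ← hdx, zero_smul,
        map_zero]
    exact (Submodule.mem_torsion_iff x).mp ((Submodule.Quotient.mk_eq_zero T).mp hx)
  · rw [Submodule.isTorsionFree_iff_torsion_eq_bot, eq_bot_iff]
    intro x hx
    rw [Submodule.mem_bot, ← one_smul R x, hdx, Submodule.mkQ_apply,
      (Submodule.Quotient.mk_eq_zero T).mpr hx, map_zero]

theorem Module.Invertible.of_isTorsionFree_of_rank_eq_one (N : Type u) [AddCommGroup N]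
    [Module R N] [Module.Finite R N] [Module.IsTorsionFree R N]
    (h : Module.rank K (K ⊗[R] N) = 1) : Module.Invertible R N := by
  obtain ⟨e⟩ : Nonempty ((K ⊗[R] N) ≃ₗ[K] K) :=
    nonempty_linearEquiv_of_rank_eq (h.trans (Module.rank_self K).symm)
  let J := Module.Flat.submoduleAlgebra e
  have hJ : J.FG := Module.Finite.iff_fg.mp (.equiv (Module.Flat.submoduleAlgebraEquiv e).symm)
  let I : FractionalIdeal R⁰ K := ⟨J, FractionalIdeal.isFractional_of_fg hJ⟩
  have hI : I ≠ 0 := fun hI => by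
    have : Subsingleton J := Submodule.subsingleton_iff_eq_bot.mpr <|
      FractionalIdeal.coeToSubmodule_eq_bot.mpr hI
    exact not_subsingleton K (Module.Flat.tensorSubmoduleAlgebraEquiv e).symm.toEquiv.subsingleton
  have hunit : IsUnit J := .of_mul_eq_one (I⁻¹ : FractionalIdeal R⁰ K) <| by
    change (I : Submodule R K) * _ = 1
    rw [← FractionalIdeal.coe_mul, mul_inv_cancel₀ hI, FractionalIdeal.coe_one]
  have : Module.Invertible R J := inferInstanceAs (Module.Invertible R hunit.unit)
  exact .congr (Module.Flat.submoduleAlgebraEquiv e)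

theorem isSemidualizing_iff_invertible (N : Type u) [AddCommGroup N] [Module R N] :
    IsSemidualizing R N ↔ Module.Invertible R N := by
  refine ⟨fun ⟨_, h, _⟩ => ?_, fun _ => Module.Invertible.isSemidualizing N⟩
  have : Module.FinitePresentation R N := Module.finitePresentation_of_finite R N
  have := isTorsionFree_of_bijective_lsmul N h
  exact .of_isTorsionFree_of_rank_eq_one N <| Module.rank_eq_one_iff_finrank_eq_one.mpr <|
    finrank_fractionRing_tensor_eq_one_of_bijective_lsmul N h

theorem invertible_iff_finite_isReflexive_rank_eq_one (N : Type u) [AddCommGroup N]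
    [Module R N] : Module.Invertible R N ↔
      Module.Finite R N ∧ Module.IsReflexive R N ∧ Module.rank K (K ⊗[R] N) = 1 :=
  ⟨fun _ => ⟨inferInstance, inferInstance, Module.Invertible.rank_eq_one K _⟩,
    fun ⟨_, _, h⟩ => .of_isTorsionFree_of_rank_eq_one N h⟩

end Dedekind

theorem statement7_general (D : Type u) [CommRing D] [IsDedekindDomain D] :
    -- Pic(D) = Cl(D) = 𝔖₀(D) :
    (∀ (N : Type u) [AddCommGroup N] [Module D N],
      (IsSemidualizing D N ↔ IsInvertibleModule D N) ∧
      (IsInvertibleModule D N ↔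
        (Module.Finite D N ∧ Module.IsReflexive D N ∧
          Module.rank (FractionRing D) (FractionRing D ⊗[D] N) = 1))) ∧
    -- nontrivial Pic gives a non-free semidualizing module :
    ((∃ (a : Type u) (_ : AddCommGroup a) (_ : Module D a),
        IsInvertibleModule D a ∧ ¬ Nonempty (a ≃ₗ[D] D)) →
      (∃ (C : Type u) (_ : AddCommGroup C) (_ : Module D C),
        IsSemidualizing D C ∧ ¬ Nonempty (C ≃ₗ[D] D))) ∧
    -- local Dedekind domains have only the free semidualizing module :
    (∀ (m : Ideal D) (hm : m.IsMaximal),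
      letI := hm.isPrime
      ∀ (C : Type u) [AddCommGroup C] [Module (Localization.AtPrime m) C],
        IsSemidualizing (Localization.AtPrime m) C →
          Nonempty (C ≃ₗ[Localization.AtPrime m] Localization.AtPrime m)) := by
  refine ⟨fun N _ _ => ?_, ?_, fun m _ C _ _ hC => ?_⟩
  · rw [isInvertibleModule_iff]
    exact ⟨isSemidualizing_iff_invertible N, invertible_iff_finite_isReflexive_rank_eq_one N⟩
  · rintro ⟨a, _, _, ha, hfree⟩
    exact ⟨a, _, _, (isSemidualizing_iff_invertible a).mpr ((isInvertibleModule_iff a).mp ha),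
      hfree⟩
  · have : IsDedekindDomain (Localization.AtPrime m) :=
      IsLocalization.isDedekindDomain D m.primeCompl_le_nonZeroDivisors _
    have := (isSemidualizing_iff_invertible C).mp hC
    exact Module.Invertible.free_iff_linearEquiv.mp inferInstance

theorem statement7 (D : Type u) [CommRing D] [IsDomain D] [IsDedekindDomain D] :
    -- Pic(D) = Cl(D) = 𝔖₀(D) :
    (∀ (N : Type u) [AddCommGroup N] [Module D N],
      (IsSemidualizing D N ↔ IsInvertibleModule D N) ∧
      (IsInvertibleModule D N ↔
        (Module.Finite D N ∧ Module.IsReflexive D N ∧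
          Module.rank (FractionRing D) (FractionRing D ⊗[D] N) = 1))) ∧
    -- nontrivial Pic gives a non-free semidualizing module :
    ((∃ (a : Type u) (_ : AddCommGroup a) (_ : Module D a),
        IsInvertibleModule D a ∧ ¬ Nonempty (a ≃ₗ[D] D)) →
      (∃ (C : Type u) (_ : AddCommGroup C) (_ : Module D C),
        IsSemidualizing D C ∧ ¬ Nonempty (C ≃ₗ[D] D))) ∧
    -- local Dedekind domains have only the free semidualizing module :
    (∀ (m : Ideal D) (hm : m.IsMaximal),
      letI := hm.isPrime
      ∀ (C : Type u) [AddCommGroup C] [Module (Localization.AtPrime m) C],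
        IsSemidualizing (Localization.AtPrime m) C →
          Nonempty (C ≃ₗ[Localization.AtPrime m] Localization.AtPrime m)) :=
  statement7_general D
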